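/- For any linear code C ⊆ F_2^n, the complete weight enumerator identity holds: for any real numbers x_i, y_i (i = 1,…,n), Σ_{v ∈ C} Π_i x_i^{1−v_i} y_i^{v_i} = (1/|C^⊥|) · Σ_{u ∈ C^⊥} Π_i (x_i + (−1)^{u_i} y_i). -/

import Mathlib

open scoped Classical

/-- Identify an element of `ZMod 2` with the natural number `0` or `1`. -/
def zmodToNat (x : ZMod 2) : ℕ := if x = 1 then 1 else 0

/-- sign character on `ZMod 2`. -/
noncomputable def zsign (a : ZMod 2) : ℝ := if a = 1 then -1 else 1

lemma zmod2_cases : ∀ a : ZMod 2, a = 0 ∨ a = 1 := by decide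

lemma zsign_add (a b : ZMod 2) : zsign (a + b) = zsign a * zsign b := by
  rcases zmod2_cases a with h | h <;> rcases zmod2_cases b with h' | h' <;>
    subst h <;> subst h' <;>
    simp [zsign, show (1 + 1 : ZMod 2) = 0 from by decide]

lemma zsign_sum {ι : Type*} (s : Finset ι) (f : ι → ZMod 2) :
    zsign (∑ i ∈ s, f i) = ∏ i ∈ s, zsign (f i) := by
  induction s using Finset.induction_on with
  | empty => simp [zsign]
  | insert _ _ ha ih => simp [Finset.sum_insert ha, Finset.prod_insert ha, zsign_add, *]

/-- the dot-product bilinear form on `Fin n → ZMod 2`. -/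
noncomputable def dotB (n : ℕ) : LinearMap.BilinForm (ZMod 2) (Fin n → ZMod 2) :=
  LinearMap.mk₂ (ZMod 2) (fun u v => ∑ i, u i * v i)
    (by intros; simp [add_mul, Finset.sum_add_distrib])
    (by intros; simp [Finset.mul_sum, mul_assoc])
    (by intros; simp [mul_add, Finset.sum_add_distrib])
    (by intros; simp [Finset.mul_sum, mul_left_comm])

lemma dotB_apply (n : ℕ) (u v : Fin n → ZMod 2) : dotB n u v = ∑ i, u i * v i := rfl

lemma dotB_symm (n : ℕ) (u v : Fin n → ZMod 2) : dotB n u v = dotB n v u := by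
  simp [dotB_apply, mul_comm]

lemma dotB_refl (n : ℕ) : (dotB n).IsRefl := by
  intro u v h
  rwa [dotB_symm]

lemma dotB_nondeg (n : ℕ) : (dotB n).Nondegenerate := by
  refine (LinearMap.IsRefl.nondegenerate_iff_separatingLeft (dotB_refl n)).mpr ?_
  intro m hm
  funext i
  have := hm (Pi.single i 1)
  simp only [dotB_apply, Pi.single_apply, mul_ite, mul_one, mul_zero,
    Finset.sum_ite_eq', Finset.mem_univ, if_true] at this
  simpa using this

/-- MacWilliams identity for the complete weight enumerator of a
binary linear code: `∑_{v∈C} ∏ᵢ xᵢ^{1-vᵢ} yᵢ^{vᵢ}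
  = (1/|C⊥|) ∑_{u∈C⊥} ∏ᵢ (xᵢ + (-1)^{uᵢ} yᵢ)`. -/
theorem complete_weight_enumerator_macwilliams (n : ℕ)
    (C : Submodule (ZMod 2) (Fin n → ZMod 2))
    (Cd : Set (Fin n → ZMod 2))
    (hCd : Cd = {u | ∀ v ∈ C, ∑ i, u i * v i = 0})
    (x y : Fin n → ℝ) :
    ∑ v ∈ Finset.univ.filter (fun v => v ∈ C),
        ∏ i, (x i) ^ (1 - zmodToNat (v i)) * (y i) ^ (zmodToNat (v i))
      = (1 / (Nat.card Cd : ℝ)) *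
        ∑ u ∈ Finset.univ.filter (fun u => u ∈ Cd),
          ∏ i, (x i + (if u i = 1 then (-1 : ℝ) else 1) * y i) := by
  have hCdOrth : Cd = ((dotB n).orthogonal C : Set (Fin n → ZMod 2)) := by
    rw [hCd]
    ext u
    simp only [Set.mem_setOf_eq, SetLike.mem_coe, LinearMap.BilinForm.mem_orthogonal_iff]
    constructor
    · intro h v hv
      rw [dotB_symm]
      exact h v hv
    · intro h v hv
      have := h v hv
      rw [dotB_symm] at this
      exact this
  set W : (Fin n → ZMod 2) → ℝ :=
    fun v => ∏ i, (x i) ^ (1 - zmodToNat (v i)) * (y i) ^ (zmodToNat (v i)) with hW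
  set Cdf : Finset (Fin n → ZMod 2) := Finset.univ.filter (fun u => u ∈ Cd) with hCdf
  -- expansion of the product
  have expand : ∀ u : Fin n → ZMod 2,
      (∏ i, (x i + (if u i = 1 then (-1 : ℝ) else 1) * y i))
        = ∑ v : Fin n → ZMod 2, zsign (∑ i, u i * v i) * W v := by
    intro u
    have h1 : ∀ i : Fin n, (x i + (if u i = 1 then (-1 : ℝ) else 1) * y i)
        = ∑ b : ZMod 2, zsign (u i * b) *
            ((x i) ^ (1 - zmodToNat b) * (y i) ^ (zmodToNat b)) := by
      intro i
      rw [show (Finset.univ : Finset (ZMod 2)) = {0, 1} from by decide,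
        Finset.sum_insert (by decide), Finset.sum_singleton]
      simp [zsign, zmodToNat]
    calc (∏ i, (x i + (if u i = 1 then (-1 : ℝ) else 1) * y i))
        = ∏ i, ∑ b : ZMod 2, zsign (u i * b) *
            ((x i) ^ (1 - zmodToNat b) * (y i) ^ (zmodToNat b)) :=
          Finset.prod_congr rfl fun i _ => h1 i
      _ = ∑ v : Fin n → ZMod 2, ∏ i, zsign (u i * v i) *
            ((x i) ^ (1 - zmodToNat (v i)) * (y i) ^ (zmodToNat (v i))) :=
          Fintype.prod_sum _
      _ = ∑ v : Fin n → ZMod 2, zsign (∑ i, u i * v i) * W v := by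
          refine Finset.sum_congr rfl fun v _ => ?_
          rw [Finset.prod_mul_distrib, ← zsign_sum, hW]
  -- inner character sum
  have inner : ∀ v : Fin n → ZMod 2,
      (∑ u ∈ Cdf, zsign (∑ i, u i * v i))
        = if v ∈ C then (Cdf.card : ℝ) else 0 := by
    intro v
    by_cases hv : v ∈ C
    · rw [if_pos hv]
      rw [Finset.sum_congr rfl (fun u hu => ?_), Finset.sum_const, nsmul_eq_mul, mul_one]
      have hu' : u ∈ Cd := (Finset.mem_filter.mp hu).2
      rw [hCd] at hu'
      rw [hu' v hv]
      simp [zsign]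
    · rw [if_neg hv]
      have hv' : v ∉ (dotB n).orthogonal ((dotB n).orthogonal C) := by
        rwa [LinearMap.BilinForm.orthogonal_orthogonal (dotB_nondeg n) (dotB_refl n)]
      rw [LinearMap.BilinForm.mem_orthogonal_iff] at hv'
      push_neg at hv'
      obtain ⟨u₀, hu₀C, hu₀v⟩ := hv'
      have hu₀Cd : u₀ ∈ Cd := by rw [hCdOrth]; exact hu₀C
      have hdot : (∑ i, u₀ i * v i) = 1 := by
        rw [dotB_apply] at hu₀v
        rcases zmod2_cases (∑ i, u₀ i * v i) with h | h
        · exact absurd h hu₀v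
        · exact h
      have hclosed : ∀ u ∈ Cdf, u + u₀ ∈ Cdf := by
        intro u hu
        have hu' : u ∈ Cd := (Finset.mem_filter.mp hu).2
        refine Finset.mem_filter.mpr ⟨Finset.mem_univ _, ?_⟩
        rw [hCd] at hu' hu₀Cd ⊢
        intro w hw
        simp only [Pi.add_apply, add_mul, Finset.sum_add_distrib, hu' w hw,
          hu₀Cd w hw, add_zero]
      have hsign : ∀ u ∈ Cdf, zsign (∑ i, u i * v i)
          = - zsign (∑ i, (u + u₀) i * v i) := by
        intro u hu
        have : (∑ i, (u + u₀) i * v i) = (∑ i, u i * v i) + ∑ i, u₀ i * v i := by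
          simp [Pi.add_apply, add_mul, Finset.sum_add_distrib]
        rw [this, zsign_add, hdot]
        simp [zsign]
      have key : (∑ u ∈ Cdf, zsign (∑ i, u i * v i))
          = -∑ u ∈ Cdf, zsign (∑ i, u i * v i) := by
        rw [← Finset.sum_neg_distrib]
        refine Finset.sum_nbij' (fun u => u + u₀) (fun u => u + u₀)
          hclosed hclosed ?_ ?_ ?_
        · intro u hu
          have : u₀ + u₀ = 0 := by
            funext i
            rcases zmod2_cases (u₀ i) with h | h <;> simp [h, show (1+1 : ZMod 2) = 0 from by decide]
          simp [add_assoc, this]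
        · intro u hu
          have : u₀ + u₀ = 0 := by
            funext i
            rcases zmod2_cases (u₀ i) with h | h <;> simp [h, show (1+1 : ZMod 2) = 0 from by decide]
          simp [add_assoc, this]
        · intro u hu
          rw [hsign u hu]
      linarith [key]
  -- counting
  have hcard : Nat.card Cd = Cdf.card := by
    rw [Nat.card_coe_set_eq, Set.ncard_eq_toFinset_card']
    congr 1
    ext u
    simp [hCdf]
  have hzero : (0 : Fin n → ZMod 2) ∈ Cdf := by
    refine Finset.mem_filter.mpr ⟨Finset.mem_univ _, ?_⟩
    rw [hCd]
    intro w hw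
    simp
  have hcpos : (0 : ℝ) < (Cdf.card : ℝ) := by
    exact_mod_cast Finset.card_pos.mpr ⟨0, hzero⟩
  -- assemble
  have main : (∑ u ∈ Cdf, ∏ i, (x i + (if u i = 1 then (-1 : ℝ) else 1) * y i))
      = (Cdf.card : ℝ) * ∑ v ∈ Finset.univ.filter (fun v => v ∈ C), W v := by
    calc (∑ u ∈ Cdf, ∏ i, (x i + (if u i = 1 then (-1 : ℝ) else 1) * y i))
        = ∑ u ∈ Cdf, ∑ v : Fin n → ZMod 2, zsign (∑ i, u i * v i) * W v :=
          Finset.sum_congr rfl fun u _ => expand u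
      _ = ∑ v : Fin n → ZMod 2, (∑ u ∈ Cdf, zsign (∑ i, u i * v i)) * W v := by
          rw [Finset.sum_comm]
          exact Finset.sum_congr rfl fun v _ => (Finset.sum_mul _ _ _).symm
      _ = ∑ v : Fin n → ZMod 2, (if v ∈ C then (Cdf.card : ℝ) else 0) * W v :=
          Finset.sum_congr rfl fun v _ => by rw [inner v]
      _ = ∑ v ∈ Finset.univ.filter (fun v => v ∈ C), (Cdf.card : ℝ) * W v := by
          rw [Finset.sum_filter]
          refine Finset.sum_congr rfl fun v _ => ?_
          by_cases hv : v ∈ C <;> simp [hv]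
      _ = (Cdf.card : ℝ) * ∑ v ∈ Finset.univ.filter (fun v => v ∈ C), W v := by
          rw [Finset.mul_sum]
  rw [hcard, main]
  field_simp
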